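/- There exists a positive integer c, depending only on C1, C2, s0, ε0, r, q and m, such that for every k ≥ k0, every n ≥ c·φ_k, every n-optimal set α_n ∈ C_{n,r}(μ), every Voronoi partition (P_a(α_n))_{a∈α_n}, and every a ∈ α_n: the index set Γ := {σ ∈ Ω_k : d(a,c_σ) ≤ (13/2)·m^{-k}} satisfies card(Γ) ≤ (15/2)^q and P_a(α_n) ∩ K ⊆ ⋃_{σ∈Γ} A_σ. -/

import Mathlib

open MeasureTheory Metric Set

noncomputable section

variable {E : Type*} [NormedAddCommGroup E] [NormedSpace ℝ E]
  [MeasurableSpace E] [BorelSpace E]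

/-- The (topological) support of a Borel measure: the set of points all of whose
neighborhoods have positive measure. -/
def msupp (μ : Measure E) : Set E := {x | ∀ ε : ℝ, 0 < ε → 0 < μ (ball x ε)}

/-- The set of achievable quantization integrals `∫ d(x,α)^r dν` over sets `α` with
`1 ≤ card α ≤ n`. -/
def quantSet (ν : Measure E) (r : ℝ) (n : ℕ) : Set ℝ :=
  {I | ∃ α : Finset E, α.Nonempty ∧ α.card ≤ n ∧ I = ∫ x, infDist x (α : Set E) ^ r ∂ν}

/-- The `n`-th quantization error of order `r`, raised to the power `r`:
`e_{n,r}(ν)^r = inf { ∫ d(x,α)^r dν : 1 ≤ card α ≤ n }`. -/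
def quantErrPow (ν : Measure E) (r : ℝ) (n : ℕ) : ℝ := sInf (quantSet ν r n)

/-- `α` is an `n`-optimal set for `ν` of order `r`. -/
def IsOptimalSet (ν : Measure E) (r : ℝ) (n : ℕ) (α : Finset E) : Prop :=
  α.Nonempty ∧ α.card ≤ n ∧ (∫ x, infDist x (α : Set E) ^ r ∂ν) = quantErrPow ν r n

/-- `P` is a Voronoi partition (into Borel sets) with respect to the finite set `α`. -/
def IsVoronoiPartition (α : Finset E) (P : E → Set E) : Prop :=
  (∀ a ∈ α, MeasurableSet (P a)) ∧
  ((⋃ a ∈ α, P a) = univ) ∧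
  (∀ a ∈ α, ∀ b ∈ α, a ≠ b → Disjoint (P a) (P b)) ∧
  (∀ a ∈ α, {x | dist x a < infDist x ((α : Set E) \ {a})} ⊆ P a) ∧
  (∀ a ∈ α, P a ⊆ {x | dist x a = infDist x (α : Set E)})

/-- `I_a(α,ν) = ∫_{P_a(α)} d(x,α)^r dν`. -/
def voronoiI (ν : Measure E) (r : ℝ) (α : Finset E) (P : E → Set E) (a : E) : ℝ :=
  ∫ x in P a, infDist x (α : Set E) ^ r ∂ν

/-- `μ` is `s0`-dimensional Ahlfors–David regular with constants `ε0, C1, C2`, together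
with the global upper bound (valid for all centers and radii). -/
def IsAhlfors (μ : Measure E) (s0 ε0 C1 C2 : ℝ) : Prop :=
  0 < s0 ∧ 0 < ε0 ∧ 0 < C1 ∧ 0 < C2 ∧
  (∀ x ∈ msupp μ, ∀ ε : ℝ, 0 < ε → ε < ε0 →
    ENNReal.ofReal (C1 * ε ^ s0) ≤ μ (closedBall x ε) ∧
    μ (closedBall x ε) ≤ ENNReal.ofReal (C2 * ε ^ s0)) ∧
  (∀ x : E, ∀ ε : ℝ, 0 < ε → μ (closedBall x ε) ≤ ENNReal.ofReal (C2 * ε ^ s0))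

/-- `h` is a similitude of ratio `ρ`. -/
def IsSimilitude (h : E → E) (ρ : ℝ) : Prop :=
  Function.Surjective h ∧ ∀ x y, dist (h x) (h y) = ρ * dist x y

/-- The measure `λ_B = μ(·|B) ∘ h`, i.e. `λ_B(A) = μ(h(A) ∩ B)/μ(B)`. -/
def condPull (μ : Measure E) (B : Set E) (h : E → E) : Measure E :=
  Measure.comap h (ProbabilityTheory.cond μ B)

/-- There exist `j` pairwise disjoint closed balls of radius `ρ` centered in `K`. -/
def PackingNum (K : Set E) (ρ : ℝ) (j : ℕ) : Prop :=
  ∃ c : Fin j → E, (∀ i, c i ∈ K) ∧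
    Pairwise fun i i' => Disjoint (closedBall (c i) ρ) (closedBall (c i') ρ)

end

/-!
The bound on `card Γ` is a volume comparison: the disjoint balls `E_σ`, `σ ∈ Γ`, lie in the ball
of radius `(15/2) m^{-k}` about `a`. By maximality of the packing the centres `c_σ` form a
`2 m^{-k}`-net of `K`, so the inclusion follows once every point of `K` is within `4 m^{-k}` of `α`.

Suppose instead that `T := max_{x ∈ K} d(x, α)`, attained at `x`, exceeds `4 m^{-k}`. Build a
competitor with at most `n` points containing `x`: add `x` if `card α < n`; otherwise replace by
`x` either a point with a null cell or, by pigeonhole over the `φ_k` centres, one of at least `c`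
points attached to the same centre. Their cells lie in one ball of radius `3T`, so one of them has
measure at most `C₂ (3T)^{s₀} / c`, and on it the new distance is at most `4T`. The ball
`B(x, g)`, `g = min (T/3) (ε₀/2)`, has measure at least `C₁ g^{s₀}` and gains
`(T - g)^r - g^r ≥ (2^r - 1) g^r`. Since `K` is bounded, `T` is at most a fixed multiple of `g`,
and for large `c` the gain beats the loss, contradicting optimality.
-/

open scoped ENNReal

section

variable {E : Type*} [NormedAddCommGroup E]

theorem IsGreatest.exists_dist_le_two_mul_of_packingNum {K : Set E} {ρ : ℝ} {N : ℕ}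
    (hN : IsGreatest {j | PackingNum K ρ j} N) {c : Fin N → E} (hcK : ∀ i, c i ∈ K)
    (hc : Pairwise fun i i' => Disjoint (closedBall (c i) ρ) (closedBall (c i') ρ))
    {x : E} (hx : x ∈ K) : ∃ i, dist x (c i) ≤ 2 * ρ := by
  by_contra! hfar
  have hfar' : ∀ i, Disjoint (closedBall (c i) ρ) (closedBall x ρ) := fun i =>
    closedBall_disjoint_closedBall (by linarith [hfar i, dist_comm x (c i)])
  have hpack : PackingNum K ρ (N + 1) := by
    refine ⟨Fin.snoc c x, Fin.lastCases (by simpa using hx) (by simpa using hcK), ?_⟩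
    intro i j hij
    induction i using Fin.lastCases <;> induction j using Fin.lastCases
    · exact absurd rfl hij
    · simpa using (hfar' _).symm
    · simpa using hfar' _
    · simpa using hc (fun h => hij (congrArg _ h))
  exact absurd (hN.2 hpack) (by omega)

theorem rpow_infDist_le_sub_of_mem_closedBall {r : ℝ} (hr : 0 < r) {s t : Set E} {x y : E}
    (hx : x ∈ t) {g : ℝ} (hgx : 2 * g ≤ infDist x s) (hy : y ∈ closedBall x g) :
    infDist y t ^ r ≤ infDist y s ^ r - ((infDist x s - g) ^ r - g ^ r) := by
  have hg : 0 ≤ g := dist_nonneg.trans hy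
  have ht : infDist y t ≤ g := (infDist_le_dist_of_mem hx).trans hy
  have hs : infDist x s - g ≤ infDist y s := by
    linarith [infDist_le_infDist_add_dist (x := x) (y := y) (s := s), dist_comm x y,
      mem_closedBall.1 hy]
  linarith [Real.rpow_le_rpow infDist_nonneg ht hr.le, Real.rpow_le_rpow (by linarith) hs hr.le]

variable [MeasurableSpace E]

theorem isClosed_msupp (μ : Measure E) : IsClosed (msupp μ) := by
  rw [← isOpen_compl_iff, Metric.isOpen_iff]
  intro x hx
  simp only [mem_compl_iff, msupp, mem_ofPred_eq, not_forall, not_lt, nonpos_iff_eq_zero] at hx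
  obtain ⟨ε, hε, hμε⟩ := hx
  refine ⟨ε / 2, half_pos hε, fun z hz hzK => ?_⟩
  have hsub : ball z (ε / 2) ⊆ ball x ε := ball_subset_ball' (by linarith [mem_ball.1 hz])
  exact (hzK (ε / 2) (half_pos hε)).ne' (measure_mono_null hsub hμε)

theorem measure_compl_msupp [OpensMeasurableSpace E] [SecondCountableTopology E] (μ : Measure E) :
    μ (msupp μ)ᶜ = 0 := by
  refine measure_null_of_locally_null _ fun x hx => ?_
  simp only [mem_compl_iff, msupp, mem_ofPred_eq, not_forall, not_lt, nonpos_iff_eq_zero] at hx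
  obtain ⟨ε, hε, hμε⟩ := hx
  exact ⟨ball x ε, mem_nhdsWithin_of_mem_nhds (ball_mem_nhds x hε), hμε⟩

theorem ae_mem_msupp [OpensMeasurableSpace E] [SecondCountableTopology E] (μ : Measure E) :
    ∀ᵐ y ∂μ, y ∈ msupp μ :=
  measure_compl_msupp μ

theorem ncard_setOf_dist_le_mul_le_pow [NormedSpace ℝ E] [BorelSpace E] [FiniteDimensional ℝ E]
    {N : ℕ} {ρ t : ℝ} (hρ : 0 < ρ) (ht : 0 ≤ t) {c : Fin N → E}
    (hc : Pairwise fun i i' => Disjoint (closedBall (c i) ρ) (closedBall (c i') ρ)) (a : E) :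
    ({i | dist a (c i) ≤ t * ρ}.ncard : ℝ) ≤ (t + 1) ^ Module.finrank ℝ E := by
  classical
  set ν : Measure E := (Module.finBasis ℝ E).addHaar
  set Γ : Finset (Fin N) := {i | dist a (c i) ≤ t * ρ}
  have hV : ν (closedBall 0 ρ) ≠ 0 := (measure_closedBall_pos ν 0 hρ).ne'
  have hV' : ν (closedBall 0 ρ) ≠ ∞ := measure_closedBall_lt_top.ne
  have hcover : (⋃ i ∈ Γ, closedBall (c i) ρ) ⊆ closedBall a ((t + 1) * ρ) := by
    simp only [iUnion_subset_iff]
    intro i hi y hy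
    have hi : dist a (c i) ≤ t * ρ := (Finset.mem_filter.1 hi).2
    rw [mem_closedBall] at hy ⊢
    linarith [dist_triangle y (c i) a, dist_comm a (c i)]
  have hvol : (Γ.card : ℝ≥0∞) * ν (closedBall 0 ρ) ≤
      ENNReal.ofReal ((t + 1) ^ Module.finrank ℝ E) * ν (closedBall 0 ρ) := by
    calc (Γ.card : ℝ≥0∞) * ν (closedBall 0 ρ) = ∑ i ∈ Γ, ν (closedBall (c i) ρ) := by
          simp [Measure.addHaar_closedBall_center]
      _ = ν (⋃ i ∈ Γ, closedBall (c i) ρ) :=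
          (measure_biUnion_finset (fun i _ j _ hij => hc hij)
            fun _ _ => measurableSet_closedBall).symm
      _ ≤ ν (closedBall a ((t + 1) * ρ)) := measure_mono hcover
      _ = _ := Measure.addHaar_closedBall_mul ν a (by linarith) hρ.le
  have hcard := (ENNReal.mul_le_mul_iff_left hV hV').1 hvol
  rw [← ENNReal.ofReal_natCast, ENNReal.ofReal_le_ofReal_iff (by positivity)] at hcard
  rwa [Set.ncard_eq_toFinset_card', Set.toFinset_ofPred]

theorem IsOptimalSet.integral_le {ν : Measure E} {r : ℝ} {n : ℕ} {α γ : Finset E}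
    (hα : IsOptimalSet ν r n α) (hγ : γ.Nonempty) (hγn : γ.card ≤ n) :
    ∫ x, infDist x (α : Set E) ^ r ∂ν ≤ ∫ x, infDist x (γ : Set E) ^ r ∂ν := by
  have hbdd : BddBelow (quantSet ν r n) := by
    refine ⟨0, ?_⟩
    rintro _ ⟨β, -, -, rfl⟩
    exact integral_nonneg fun _ => Real.rpow_nonneg infDist_nonneg r
  rw [hα.2.2]
  exact csInf_le hbdd ⟨γ, hγ, hγn, rfl⟩

theorem integrable_infDist_rpow [OpensMeasurableSpace E] {μ : Measure E} [IsFiniteMeasure μ]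
    {r : ℝ} (hr : 0 < r) {γ : Finset E} (hγ : γ.Nonempty) {z₀ : E} {R : ℝ}
    (hR : ∀ᵐ y ∂μ, dist y z₀ ≤ R) :
    Integrable (fun y => infDist y (γ : Set E) ^ r) μ := by
  obtain ⟨b, hb⟩ := hγ
  have hcont : Continuous fun y => infDist y (γ : Set E) ^ r :=
    (continuous_infDist_pt _).rpow_const fun _ => Or.inr hr.le
  refine Integrable.mono' (integrable_const ((R + dist z₀ b) ^ r)) hcont.aestronglyMeasurable ?_
  filter_upwards [hR] with y hy
  rw [Real.norm_of_nonneg (Real.rpow_nonneg infDist_nonneg r)]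
  refine Real.rpow_le_rpow infDist_nonneg ?_ hr.le
  calc infDist y (γ : Set E) ≤ dist y b := infDist_le_dist_of_mem hb
    _ ≤ R + dist z₀ b := by linarith [dist_triangle y z₀ b]

namespace IsVoronoiPartition

variable {α : Finset E} {P : E → Set E}

theorem dist_eq_infDist (hP : IsVoronoiPartition α P) {a y : E} (ha : a ∈ α) (hy : y ∈ P a) :
    dist y a = infDist y (α : Set E) :=
  hP.2.2.2.2 a ha hy

theorem exists_mem (hP : IsVoronoiPartition α P) (y : E) : ∃ a ∈ α, y ∈ P a := by
  have hy : y ∈ ⋃ a ∈ α, P a := hP.2.1 ▸ mem_univ y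
  simpa using hy

theorem infDist_insert_erase_le [DecidableEq E] (hP : IsVoronoiPartition α P) {a y : E}
    (hy : y ∉ P a) (x : E) :
    infDist y (insert x (α.erase a) : Finset E) ≤ infDist y (α : Set E) := by
  obtain ⟨b, hb, hyb⟩ := hP.exists_mem y
  have hba : b ≠ a := by rintro rfl; exact hy hyb
  rw [← hP.dist_eq_infDist hb hyb]
  exact infDist_le_dist_of_mem (by simp [hb, hba])

theorem sum_measureReal_le {μ : Measure E} [IsFiniteMeasure μ] (hP : IsVoronoiPartition α P)
    {K : Set E} (hKm : MeasurableSet K) (hK : μ Kᶜ = 0) {F : Finset E} (hF : F ⊆ α)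
    {A : Set E} (hA : ∀ a ∈ F, P a ∩ K ⊆ A) : ∑ a ∈ F, μ.real (P a) ≤ μ.real A := by
  have hdisj : (F : Set E).PairwiseDisjoint fun a => P a ∩ K := fun a ha b hb hab =>
    (hP.2.2.1 a (hF ha) b (hF hb) hab).mono inter_subset_left inter_subset_left
  calc ∑ a ∈ F, μ.real (P a) = ∑ a ∈ F, μ.real (P a ∩ K) := by
        simp only [measureReal_def, measure_inter_conull hK]
    _ = μ.real (⋃ a ∈ F, P a ∩ K) :=
        (measureReal_biUnion_finset hdisj fun a ha => (hP.1 a (hF ha)).inter hKm).symm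
    _ ≤ μ.real A := measureReal_mono (iUnion₂_subset hA)

end IsVoronoiPartition

section Competitor

variable {μ : Measure E} [IsFiniteMeasure μ] {α : Finset E} {P : E → Set E} {K : Set E}
  {T δ M : ℝ} {N c : ℕ}

theorem IsVoronoiPartition.exists_light_cell_near (hP : IsVoronoiPartition α P)
    (hα : α.Nonempty) (hKm : MeasurableSet K) (hK : μ Kᶜ = 0)
    (hT : ∀ y ∈ K, infDist y (α : Set E) ≤ T) (ctr : Fin N → E)
    (hnet : ∀ y ∈ K, ∃ σ, dist y (ctr σ) ≤ δ)
    (hball : ∀ z, μ.real (closedBall z (2 * T + δ)) ≤ M) (hpos : ∀ a ∈ α, μ (P a) ≠ 0)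
    (hc : 2 ≤ c) (hcard : c * N ≤ α.card) :
    ∃ a ∈ α, ∃ b ∈ α, b ≠ a ∧ dist a b ≤ 2 * (T + δ) ∧ μ.real (P a) ≤ M / c := by
  have hnear : ∀ a ∈ α, ∃ σ, dist a (ctr σ) ≤ T + δ := by
    intro a ha
    obtain ⟨y, hyP, hyK⟩ : (P a ∩ K).Nonempty :=
      nonempty_of_measure_ne_zero (by rw [measure_inter_conull hK]; exact hpos a ha)
    obtain ⟨σ, hσ⟩ := hnet y hyK
    have hya : dist y a ≤ T := hP.dist_eq_infDist ha hyP ▸ hT y hyK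
    exact ⟨σ, by linarith [dist_triangle a y (ctr σ), dist_comm a y]⟩
  have : Nonempty (Fin N) := let ⟨a, ha⟩ := hα; ⟨(hnear a ha).choose⟩
  choose! σ hσ using hnear
  obtain ⟨τ, -, hfiber⟩ := Finset.exists_le_card_fiber_of_mul_le_card_of_maps_to
    (f := σ) (t := Finset.univ) (fun _ _ => Finset.mem_univ _) Finset.univ_nonempty
    (by rwa [Finset.card_univ, Fintype.card_fin, mul_comm])
  set F := α.filter fun a => σ a = τ
  have hFα : F ⊆ α := Finset.filter_subset _ _
  have hFτ : ∀ a ∈ F, dist a (ctr τ) ≤ T + δ := fun a ha => by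
    obtain ⟨haα, rfl⟩ := Finset.mem_filter.1 ha
    exact hσ a haα
  have hsum : ∑ a ∈ F, μ.real (P a) ≤ M := by
    refine (hP.sum_measureReal_le hKm hK hFα fun a ha y hy => ?_).trans (hball (ctr τ))
    have hya : dist y a ≤ T := hP.dist_eq_infDist (hFα ha) hy.1 ▸ hT y hy.2
    rw [mem_closedBall]
    linarith [dist_triangle y a (ctr τ), hFτ a ha]
  obtain ⟨a, haF, ha⟩ : ∃ a ∈ F, μ.real (P a) ≤ M / c := by
    refine Finset.exists_le_of_sum_le (Finset.card_pos.1 (by omega)) (hsum.trans ?_)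
    rw [Finset.sum_const, nsmul_eq_mul]
    have hM : 0 ≤ M := measureReal_nonneg.trans (hball 0)
    calc M = c * (M / c) := by field_simp
      _ ≤ F.card * (M / c) := by gcongr
  obtain ⟨b, hbF, hba⟩ := Finset.exists_mem_ne (by omega : 1 < F.card) a
  refine ⟨a, hFα haF, b, hFα hbF, hba, ?_, ha⟩
  linarith [dist_triangle a (ctr τ) b, dist_comm b (ctr τ), hFτ a haF, hFτ b hbF]

theorem IsVoronoiPartition.exists_competitor [DecidableEq E] (hP : IsVoronoiPartition α P)
    (hα : α.Nonempty) {n : ℕ} (hαn : α.card ≤ n) (hKm : MeasurableSet K) (hK : μ Kᶜ = 0)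
    (hT : ∀ y ∈ K, infDist y (α : Set E) ≤ T) (ctr : Fin N → E)
    (hnet : ∀ y ∈ K, ∃ σ, dist y (ctr σ) ≤ δ)
    (hball : ∀ z, μ.real (closedBall z (2 * T + δ)) ≤ M) (hc : 2 ≤ c) (hn : c * N ≤ n)
    (x : E) :
    ∃ β : Finset E, β.card ≤ n ∧ x ∈ β ∧ ∃ S, MeasurableSet S ∧ μ.real S ≤ M / c ∧
      (∀ᵐ y ∂μ, y ∈ S → infDist y (β : Set E) ≤ 3 * T + 2 * δ) ∧
      ∀ y ∉ S, infDist y (β : Set E) ≤ infDist y (α : Set E) := by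
  have hM : 0 ≤ M / c := div_nonneg (measureReal_nonneg.trans (hball x)) c.cast_nonneg
  rcases hαn.lt_or_eq with hlt | rfl
  · refine ⟨insert x α, (Finset.card_insert_le _ _).trans hlt, Finset.mem_insert_self _ _, ∅,
      .empty, by simpa using hM, by simp, fun y _ => ?_⟩
    exact infDist_le_infDist_of_subset (by simp [Set.subset_insert]) (by simpa using hα)
  obtain ⟨a, ha, hμa, hS⟩ : ∃ a ∈ α, μ.real (P a) ≤ M / c ∧
      ∀ᵐ y ∂μ, y ∈ P a → infDist y (insert x (α.erase a) : Finset E) ≤ 3 * T + 2 * δ := by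
    by_cases hnull : ∃ a ∈ α, μ (P a) = 0
    · obtain ⟨a, ha, h0⟩ := hnull
      refine ⟨a, ha, by simpa [measureReal_def, h0] using hM, ?_⟩
      filter_upwards [measure_eq_zero_iff_ae_notMem.1 h0] with y hy hy' using absurd hy' hy
    · obtain ⟨a, ha, b, hb, hba, hab, hμa⟩ := hP.exists_light_cell_near hα hKm hK hT ctr hnet
        hball (fun a ha h0 => hnull ⟨a, ha, h0⟩) hc hn
      refine ⟨a, ha, hμa, ?_⟩
      filter_upwards [show ∀ᵐ y ∂μ, y ∈ K from hK] with y hyK hy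
      calc infDist y (insert x (α.erase a) : Finset E) ≤ dist y b :=
            infDist_le_dist_of_mem (by simp [hb, hba])
        _ ≤ dist y a + dist a b := dist_triangle _ _ _
        _ ≤ 3 * T + 2 * δ := by linarith [hP.dist_eq_infDist ha hy ▸ hT y hyK]
  refine ⟨insert x (α.erase a), ?_, Finset.mem_insert_self _ _, P a, hP.1 a ha, hμa, hS,
    fun y hy => hP.infDist_insert_erase_le hy x⟩
  exact (Finset.card_insert_le _ _).trans (Finset.card_erase_add_one ha).le

end Competitor

theorem integral_infDist_rpow_le [OpensMeasurableSpace E] {μ : Measure E} [IsFiniteMeasure μ]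
    {r : ℝ} (hr : 0 < r) {α β : Finset E}
    (hαi : Integrable (fun y => infDist y (α : Set E) ^ r) μ)
    (hβi : Integrable (fun y => infDist y (β : Set E) ^ r) μ) {x : E} (hx : x ∈ β) {g L : ℝ}
    (hgx : 2 * g ≤ infDist x (α : Set E)) {S : Set E} (hSm : MeasurableSet S)
    (hS : ∀ᵐ y ∂μ, y ∈ S → infDist y (β : Set E) ≤ L)
    (hoff : ∀ y ∉ S, infDist y (β : Set E) ≤ infDist y (α : Set E)) :
    ∫ y, infDist y (β : Set E) ^ r ∂μ ≤ ∫ y, infDist y (α : Set E) ^ r ∂μ + L ^ r * μ.real S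
      - ((infDist x (α : Set E) - g) ^ r - g ^ r) * μ.real (closedBall x g) := by
  set T := infDist x (α : Set E)
  set G := (T - g) ^ r - g ^ r
  set B := closedBall x g
  have hpt : ∀ᵐ y ∂μ, infDist y (β : Set E) ^ r ≤ infDist y (α : Set E) ^ r
      + S.indicator (fun _ => L ^ r) y - B.indicator (fun _ => G) y := by
    filter_upwards [hS] with y hyS
    have hgain (hyB : y ∈ B) : infDist y (β : Set E) ^ r ≤ infDist y (α : Set E) ^ r - G :=
      rpow_infDist_le_sub_of_mem_closedBall hr (Finset.mem_coe.2 hx) hgx hyB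
    have hαnn : 0 ≤ infDist y (α : Set E) ^ r := Real.rpow_nonneg infDist_nonneg r
    by_cases hyS' : y ∈ S
    · have hLnn : 0 ≤ L ^ r := Real.rpow_nonneg (infDist_nonneg.trans (hyS hyS')) r
      have hloss := Real.rpow_le_rpow infDist_nonneg (hyS hyS') hr.le
      by_cases hyB : y ∈ B
      · simp only [indicator_of_mem hyS', indicator_of_mem hyB]
        linarith [hgain hyB]
      · simp only [indicator_of_mem hyS', indicator_of_notMem hyB]
        linarith
    · simp only [indicator_of_notMem hyS', add_zero]
      by_cases hyB : y ∈ B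
      · simpa only [indicator_of_mem hyB] using hgain hyB
      · simpa only [indicator_of_notMem hyB, sub_zero] using
          Real.rpow_le_rpow infDist_nonneg (hoff y hyS') hr.le
  have hSi : Integrable (S.indicator fun _ => L ^ r) μ := (integrable_const _).indicator hSm
  have hBi : Integrable (B.indicator fun _ => G) μ :=
    (integrable_const _).indicator measurableSet_closedBall
  have hαSi : Integrable
      (fun y => infDist y (α : Set E) ^ r + S.indicator (fun _ => L ^ r) y) μ := hαi.add hSi
  calc ∫ y, infDist y (β : Set E) ^ r ∂μ
      ≤ ∫ y, (infDist y (α : Set E) ^ r + S.indicator (fun _ => L ^ r) y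
          - B.indicator (fun _ => G) y) ∂μ := integral_mono_ae hβi (hαSi.sub hBi) hpt
    _ = _ := by
      rw [integral_sub hαSi hBi, integral_add hαi hSi,
        integral_indicator_const _ hSm, integral_indicator_const _ measurableSet_closedBall]
      simp only [smul_eq_mul]
      ring

theorem rpow_mul_div_lt_rpow_sub_rpow_mul {r s C₁ C₂ Q T g c : ℝ} (hr : 0 < r) (hs : 0 ≤ s)
    (hC₁ : 0 < C₁) (hC₂ : 0 ≤ C₂) (hg : 0 < g) (h3g : 3 * g ≤ T) (hTQ : T ≤ Q * g)
    (hc : C₂ * (4 * Q) ^ r * (3 * Q) ^ s / (C₁ * (2 ^ r - 1)) < c) :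
    (4 * T) ^ r * (C₂ * (3 * T) ^ s / c) < ((T - g) ^ r - g ^ r) * (C₁ * g ^ s) := by
  have hT : 0 ≤ T := by linarith
  have hQ : 0 ≤ Q := nonneg_of_mul_nonneg_left (hT.trans hTQ) hg
  have hD : 0 < C₁ * (2 ^ r - 1) :=
    mul_pos hC₁ (sub_pos.2 (Real.one_lt_rpow (by norm_num) hr))
  have hc₀ : 0 < c := (div_nonneg (by positivity) hD.le).trans_lt hc
  have hcD : C₂ * (4 * Q) ^ r * (3 * Q) ^ s / c < C₁ * (2 ^ r - 1) := by
    rw [div_lt_iff₀ hc₀, mul_comm _ c]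
    rwa [div_lt_iff₀ hD] at hc
  have h4 : (4 * T) ^ r ≤ (4 * Q) ^ r * g ^ r := by
    rw [← Real.mul_rpow (by positivity) hg.le]
    exact Real.rpow_le_rpow (by positivity) (by linarith) hr.le
  have h3 : (3 * T) ^ s ≤ (3 * Q) ^ s * g ^ s := by
    rw [← Real.mul_rpow (by positivity) hg.le]
    exact Real.rpow_le_rpow (by positivity) (by linarith) hs
  calc (4 * T) ^ r * (C₂ * (3 * T) ^ s / c)
      ≤ (4 * Q) ^ r * g ^ r * (C₂ * ((3 * Q) ^ s * g ^ s) / c) := by gcongr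
    _ = C₂ * (4 * Q) ^ r * (3 * Q) ^ s / c * (g ^ r * g ^ s) := by ring
    _ < C₁ * (2 ^ r - 1) * (g ^ r * g ^ s) := by gcongr
    _ = (2 ^ r * g ^ r - g ^ r) * (C₁ * g ^ s) := by ring
    _ ≤ ((T - g) ^ r - g ^ r) * (C₁ * g ^ s) := by
      rw [← Real.mul_rpow (by norm_num) hg.le]
      gcongr
      linarith

theorem IsOptimalSet.infDist_le_three_mul [OpensMeasurableSpace E] {μ : Measure E}
    [IsProbabilityMeasure μ] {r : ℝ} (hr : 0 < r) {n : ℕ} {α : Finset E}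
    (hα : IsOptimalSet μ r n α) {K : Set E} (hKc : IsCompact K) (hK : μ Kᶜ = 0) {z₀ : E}
    {R : ℝ} (hKR : K ⊆ closedBall z₀ R) {x : E} (hx : x ∈ K) :
    infDist x (α : Set E) ≤ 3 * R := by
  suffices ∃ y ∈ K, infDist y (α : Set E) ≤ R by
    obtain ⟨y, hyK, hy⟩ := this
    linarith [infDist_le_infDist_add_dist (x := x) (y := y) (s := (α : Set E)),
      dist_triangle_right x y z₀, mem_closedBall.1 (hKR hx), mem_closedBall.1 (hKR hyK)]
  have hae : ∀ᵐ z ∂μ, z ∈ K := hK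
  have hKne : K.Nonempty :=
    nonempty_of_measure_ne_zero (by rw [← univ_inter K, measure_inter_conull hK]; simp)
  obtain ⟨y, hyK, hymin⟩ := hKc.exists_isMinOn hKne (continuous_infDist_pt _).continuousOn
  refine ⟨y, hyK, ?_⟩
  by_contra! hR
  have hR₀ : 0 ≤ R := dist_nonneg.trans (hKR hyK)
  have hz₀ : ({z₀} : Finset E).card ≤ n := by
    simpa using Nat.succ_le_of_lt (hα.1.card_pos.trans_le hα.2.1)
  have hint := fun (γ : Finset E) (hγ : γ.Nonempty) =>
    integrable_infDist_rpow (μ := μ) hr hγ (hae.mono fun z hz => hKR hz)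
  have hlow : infDist y (α : Set E) ^ r ≤ ∫ z, infDist z (α : Set E) ^ r ∂μ := by
    simpa using integral_mono_ae (integrable_const _) (hint α hα.1) (hae.mono fun z hz =>
      Real.rpow_le_rpow infDist_nonneg (hymin hz) hr.le)
  have hup : ∫ z, infDist z (({z₀} : Finset E) : Set E) ^ r ∂μ ≤ R ^ r := by
    simpa using integral_mono_ae (hint {z₀} (Finset.singleton_nonempty z₀))
      (integrable_const (R ^ r)) (hae.mono fun z hz => Real.rpow_le_rpow infDist_nonneg
        (by simpa using hKR hz) hr.le)
  linarith [hα.integral_le (Finset.singleton_nonempty z₀) hz₀,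
    Real.rpow_lt_rpow hR₀ hR hr]

theorem IsAhlfors.le_measureReal_closedBall {μ : Measure E} [IsFiniteMeasure μ]
    {s₀ ε₀ C₁ C₂ : ℝ} (hμ : IsAhlfors μ s₀ ε₀ C₁ C₂) {x : E} (hx : x ∈ msupp μ) {ε : ℝ}
    (hε : 0 < ε) (hεε₀ : ε < ε₀) : C₁ * ε ^ s₀ ≤ μ.real (closedBall x ε) :=
  (ENNReal.ofReal_le_iff_le_toReal (measure_ne_top _ _)).1 (hμ.2.2.2.2.1 x hx ε hε hεε₀).1

theorem IsAhlfors.measureReal_closedBall_le {μ : Measure E} {s₀ ε₀ C₁ C₂ : ℝ}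
    (hμ : IsAhlfors μ s₀ ε₀ C₁ C₂) (x : E) {ε : ℝ} (hε : 0 < ε) :
    μ.real (closedBall x ε) ≤ C₂ * ε ^ s₀ :=
  ENNReal.toReal_le_of_le_ofReal (mul_nonneg hμ.2.2.2.1.le (Real.rpow_nonneg hε.le _))
    (hμ.2.2.2.2.2 x ε hε)

theorem IsOptimalSet.infDist_le_of_net [OpensMeasurableSpace E] [ProperSpace E] {r : ℝ}
    (hr : 0 < r) {μ : Measure E} [IsProbabilityMeasure μ] {s₀ ε₀ C₁ C₂ : ℝ}
    (hμ : IsAhlfors μ s₀ ε₀ C₁ C₂) {z₀ : E} {R : ℝ} (hKR : msupp μ ⊆ closedBall z₀ R)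
    {Q : ℝ} (hQ : 3 ≤ Q) (hRQ : 6 * R ≤ Q * ε₀) {ρ : ℝ} (hρ : 0 < ρ) {N : ℕ}
    (ctr : Fin N → E) (hnet : ∀ y ∈ msupp μ, ∃ σ, dist y (ctr σ) ≤ 2 * ρ) {c : ℕ}
    (hc₂ : 2 ≤ c) (hc : C₂ * (4 * Q) ^ r * (3 * Q) ^ s₀ / (C₁ * (2 ^ r - 1)) < c) {n : ℕ}
    (hn : c * N ≤ n) {α : Finset E} (hα : IsOptimalSet μ r n α) {P : E → Set E}
    (hP : IsVoronoiPartition α P) {x₀ : E} (hx₀ : x₀ ∈ msupp μ) :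
    infDist x₀ (α : Set E) ≤ 4 * ρ := by
  classical
  have ⟨hs₀, hε₀, hC₁, hC₂, _⟩ := hμ
  have hK : μ (msupp μ)ᶜ = 0 := measure_compl_msupp μ
  have hKc : IsCompact (msupp μ) :=
    (isCompact_closedBall z₀ R).of_isClosed_subset (isClosed_msupp μ) hKR
  have hint (γ : Finset E) (hγ : γ.Nonempty) :
      Integrable (fun y => infDist y (γ : Set E) ^ r) μ :=
    integrable_infDist_rpow hr hγ ((ae_mem_msupp μ).mono fun y hy => hKR hy)
  obtain ⟨x, hxK, hxmax⟩ :=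
    hKc.exists_isMaxOn ⟨x₀, hx₀⟩ (continuous_infDist_pt (α : Set E)).continuousOn
  set T := infDist x (α : Set E)
  have hT : ∀ y ∈ msupp μ, infDist y (α : Set E) ≤ T := fun y hy => hxmax hy
  by_contra! hρx₀
  have hρT : 4 * ρ < T := hρx₀.trans_le (hT x₀ hx₀)
  have hT3R : T ≤ 3 * R := hα.infDist_le_three_mul hr hKc hK hKR hxK
  obtain ⟨g, hg, hgε, h3g, hTQ⟩ : ∃ g, 0 < g ∧ g < ε₀ ∧ 3 * g ≤ T ∧ T ≤ Q * g := by
    rcases le_total (T / 3) (ε₀ / 2) with h | h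
    · exact ⟨T / 3, by linarith, by linarith, by linarith, by nlinarith⟩
    · exact ⟨ε₀ / 2, by linarith, by linarith, by linarith, by linarith⟩
  have hball (z : E) : μ.real (closedBall z (2 * T + 2 * ρ)) ≤ C₂ * (3 * T) ^ s₀ :=
    (measureReal_mono (closedBall_subset_closedBall (by linarith))).trans
      (hμ.measureReal_closedBall_le z (by linarith))
  obtain ⟨β, hβn, hxβ, S, hSm, hSμ, hS, hoff⟩ := hP.exists_competitor hα.1 hα.2.1
    (isClosed_msupp μ).measurableSet hK hT ctr hnet hball hc₂ hn x
  have hB := hμ.le_measureReal_closedBall hxK hg hgε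
  have hcomp := integral_infDist_rpow_le hr (hint α hα.1) (hint β ⟨x, hxβ⟩) hxβ (g := g)
    (by linarith) hSm (L := 4 * T) (hS.mono fun y hy hyS => (hy hyS).trans (by linarith)) hoff
  have hloss : (4 * T) ^ r * μ.real S ≤ (4 * T) ^ r * (C₂ * (3 * T) ^ s₀ / c) :=
    mul_le_mul_of_nonneg_left hSμ (Real.rpow_nonneg (by linarith) r)
  have hgain : ((T - g) ^ r - g ^ r) * (C₁ * g ^ s₀) ≤
      ((T - g) ^ r - g ^ r) * μ.real (closedBall x g) :=
    mul_le_mul_of_nonneg_left hB (sub_nonneg.2 (Real.rpow_le_rpow hg.le (by linarith) hr.le))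
  linarith [hα.integral_le ⟨x, hxβ⟩ hβn,
    rpow_mul_div_lt_rpow_sub_rpow_mul hr hs₀.le hC₁ hC₂.le hg h3g hTQ hc]

end

theorem stmt18_general {E : Type*} [NormedAddCommGroup E] [NormedSpace ℝ E]
    [MeasurableSpace E] [BorelSpace E] [FiniteDimensional ℝ E]
    (q : ℕ) (hq : Module.finrank ℝ E = q)
    (r : ℝ) (hr : 0 < r)
    (μ : MeasureTheory.Measure E) [MeasureTheory.IsProbabilityMeasure μ]
    (s0 ε0 C1 C2 : ℝ) (hμ : IsAhlfors μ s0 ε0 C1 C2)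
    (m : ℕ) (hm : 2 ≤ m) (k0 : ℕ)
    (φ : ℕ → ℕ)
    (hφ : ∀ k, k0 ≤ k →
      IsGreatest {j | PackingNum (msupp μ) (((m : ℝ) ^ k)⁻¹) j} (φ k))
    (ctr : (k : ℕ) → Fin (φ k) → E)
    (hctr : ∀ k, k0 ≤ k → (∀ i, ctr k i ∈ msupp μ) ∧
      Pairwise fun i i' => Disjoint (Metric.closedBall (ctr k i) (((m : ℝ) ^ k)⁻¹))
        (Metric.closedBall (ctr k i') (((m : ℝ) ^ k)⁻¹))) :
    ∃ c : ℕ, 0 < c ∧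
      ∀ k, k0 ≤ k → ∀ n : ℕ, c * φ k ≤ n → ∀ α : Finset E, IsOptimalSet μ r n α →
        ∀ P : E → Set E, IsVoronoiPartition α P → ∀ a ∈ α,
          (({σ : Fin (φ k) |
              dist a (ctr k σ) ≤ (13 / 2 : ℝ) * ((m : ℝ) ^ k)⁻¹}.ncard : ℝ)
            ≤ (15 / 2 : ℝ) ^ q) ∧
          P a ∩ msupp μ ⊆
            ⋃ σ ∈ {σ : Fin (φ k) | dist a (ctr k σ) ≤ (13 / 2 : ℝ) * ((m : ℝ) ^ k)⁻¹},
              Metric.closedBall (ctr k σ) (2 * ((m : ℝ) ^ k)⁻¹) := by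
  have hρ (k : ℕ) : 0 < ((m : ℝ) ^ k)⁻¹ := by
    have : (0 : ℝ) < m := by exact_mod_cast (by omega : 0 < m)
    positivity
  have hnet (k : ℕ) (hk : k0 ≤ k) (x : E) (hx : x ∈ msupp μ) :
      ∃ σ, dist x (ctr k σ) ≤ 2 * ((m : ℝ) ^ k)⁻¹ :=
    (hφ k hk).exists_dist_le_two_mul_of_packingNum (hctr k hk).1 (hctr k hk).2 hx
  have hKb : Bornology.IsBounded (msupp μ) :=
    (Bornology.isBounded_iUnion.2 fun σ => isBounded_closedBall).subset
      fun x hx => mem_iUnion.2 (hnet k0 le_rfl x hx)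
  obtain ⟨R, hR⟩ := hKb.subset_closedBall (0 : E)
  set Q := max 3 (6 * R / ε0)
  have hRQ : 6 * R ≤ Q * ε0 := (div_le_iff₀ hμ.2.1).1 (le_max_right _ _)
  obtain ⟨c, hc⟩ := exists_nat_gt (C2 * (4 * Q) ^ r * (3 * Q) ^ s0 / (C1 * (2 ^ r - 1)))
  refine ⟨c + 2, by omega, fun k hk n hn α hα P hP a ha => ⟨?_, ?_⟩⟩
  · have h := ncard_setOf_dist_le_mul_le_pow (hρ k) (by norm_num : (0 : ℝ) ≤ 13 / 2) (hctr k hk).2 a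
    rwa [hq, show (13 / 2 + 1 : ℝ) = 15 / 2 by norm_num] at h
  · rintro y ⟨hyP, hyK⟩
    obtain ⟨σ, hσ⟩ := hnet k hk y hyK
    have hya : dist y a ≤ 4 * ((m : ℝ) ^ k)⁻¹ := hP.dist_eq_infDist ha hyP ▸
      hα.infDist_le_of_net hr hμ hR (le_max_left _ _) hRQ (hρ k) (ctr k) (hnet k hk) (by omega)
        (hc.trans (by push_cast; linarith)) hn hP hyK
    exact mem_biUnion (show dist a (ctr k σ) ≤ 13 / 2 * ((m : ℝ) ^ k)⁻¹ by
      linarith [dist_triangle_left a (ctr k σ) y, hρ k]) hσ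

/-- There is a positive integer `c` such that for every `k ≥ k0`, every
`n ≥ c·φ_k`, every `n`-optimal set `α`, every Voronoi partition `P` and every `a ∈ α`: the
index set `Γ = {σ ∈ Ω_k : d(a,c_σ) ≤ (13/2)m^{-k}}` has at most `(15/2)^q` elements and
`P_a(α) ∩ K ⊆ ⋃_{σ∈Γ} A_σ`. -/
theorem stmt18 {E : Type*} [NormedAddCommGroup E] [NormedSpace ℝ E]
    [MeasurableSpace E] [BorelSpace E] [FiniteDimensional ℝ E]
    (q : ℕ) (hq : Module.finrank ℝ E = q)
    (r : ℝ) (hr : 0 < r)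
    (μ : MeasureTheory.Measure E) [MeasureTheory.IsProbabilityMeasure μ]
    (s0 ε0 C1 C2 : ℝ) (hμ : IsAhlfors μ s0 ε0 C1 C2)
    (m : ℕ) (hm : 2 ≤ m) (k0 : ℕ)
    (hk0 : 2 * ((m : ℝ) ^ k0)⁻¹ < ε0)
    (hk0min : ∀ j : ℕ, 2 * ((m : ℝ) ^ j)⁻¹ < ε0 → k0 ≤ j)
    (φ : ℕ → ℕ)
    (hφ : ∀ k, k0 ≤ k →
      IsGreatest {j | PackingNum (msupp μ) (((m : ℝ) ^ k)⁻¹) j} (φ k))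
    (ctr : (k : ℕ) → Fin (φ k) → E)
    (hctr : ∀ k, k0 ≤ k → (∀ i, ctr k i ∈ msupp μ) ∧
      Pairwise fun i i' => Disjoint (Metric.closedBall (ctr k i) (((m : ℝ) ^ k)⁻¹))
        (Metric.closedBall (ctr k i') (((m : ℝ) ^ k)⁻¹))) :
    ∃ c : ℕ, 0 < c ∧
      ∀ k, k0 ≤ k → ∀ n : ℕ, c * φ k ≤ n → ∀ α : Finset E, IsOptimalSet μ r n α →
        ∀ P : E → Set E, IsVoronoiPartition α P → ∀ a ∈ α,
          (({σ : Fin (φ k) |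
              dist a (ctr k σ) ≤ (13 / 2 : ℝ) * ((m : ℝ) ^ k)⁻¹}.ncard : ℝ)
            ≤ (15 / 2 : ℝ) ^ q) ∧
          P a ∩ msupp μ ⊆
            ⋃ σ ∈ {σ : Fin (φ k) | dist a (ctr k σ) ≤ (13 / 2 : ℝ) * ((m : ℝ) ^ k)⁻¹},
              Metric.closedBall (ctr k σ) (2 * ((m : ℝ) ^ k)⁻¹) :=
  stmt18_general q hq r hr μ s0 ε0 C1 C2 hμ m hm k0 φ hφ ctr hctr
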